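/- For any two PMTA A₁ and A₂ over the same finite alphabet Σ, there exists a PMTA A over Σ with L(A) = L(A₁) ∩ L(A₂). -/

import Mathlib

/-
Both automata are run in parallel. The product counts on the prefix closure of the root and of
the counting positions of the two runs; this region is finite, so every infinite path leaves it
and the Muller condition can be checked componentwise on pairs of states. Inside the region each
transition is a counting transition whose counter vector concatenates the two component labels,
each followed by a coordinate that is `1` exactly at a genuine counting position of that
component. Summed up, that coordinate tells whether the component counted at all, which lets a
semilinear constraint impose `Cᵢ` only in that case, as the acceptance condition of `Aᵢ` demands.
-/

/-- Positions in a binary tree: finite words over `{0,1}`. -/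
abbrev Pos : Type := List Bool

/-- Vectors of natural numbers of dimension `s`. -/
abbrev Vec (s : ℕ) : Type := Fin s → ℕ

/-- An infinite path: a sequence of positions starting at the root, each step
descending to a child. -/
def IsPath (π : ℕ → Pos) : Prop :=
  π 0 = [] ∧ ∀ i : ℕ, ∃ b : Bool, π (i + 1) = π i ++ [b]

/-- The set of values occurring infinitely often in a sequence. -/
def infOcc {Q : Type*} (g : ℕ → Q) : Set Q :=
  {q | {n : ℕ | g n = q}.Infinite}

/-- A linear subset of `ℕ^s`. -/
def IsLinearSetVec {s : ℕ} (C : Set (Vec s)) : Prop :=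
  ∃ (l : ℕ) (v₀ : Vec s) (v : Fin l → Vec s),
    C = {w | ∃ m : Fin l → ℕ, w = v₀ + ∑ i, m i • v i}

/-- A semilinear subset of `ℕ^s`: a finite union of linear sets. -/
def IsSemilinearSetVec {s : ℕ} (C : Set (Vec s)) : Prop :=
  ∃ (k : ℕ) (Cs : Fin k → Set (Vec s)),
    (∀ i, IsLinearSetVec (Cs i)) ∧ C = ⋃ i, Cs i

/-- A Parikh-Muller tree automaton of dimension `s` over the alphabet `σ`.
Labels in `Σ × D` are modelled as pairs `(a, some d)` and labels in `Σ` as `(a, none)`. -/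
structure PMTA (σ : Type) (s : ℕ) where
  /-- states -/
  Q : Type
  finQ : Finite Q
  /-- counting states -/
  QP : Set Q
  /-- Muller states -/
  Qω : Set Q
  hdisj : Disjoint QP Qω
  hcover : QP ∪ Qω = Set.univ
  /-- initial state -/
  qI : Q
  /-- the finite set of counter increments -/
  D : Set (Vec s)
  hD : D.Finite
  /-- counting transitions -/
  ΔP : Set (Q × (σ × Vec s) × Q × Q)
  /-- Muller transitions -/
  Δω : Set (Q × σ × Q × Q)
  hΔP : ∀ t ∈ ΔP, t.1 ∈ QP ∪ {qI} ∧ t.2.1.2 ∈ D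
  hΔω : ∀ t ∈ Δω, t.1 ∈ Qω ∪ {qI} ∧ t.2.2.1 ∈ Qω ∧ t.2.2.2 ∈ Qω
  /-- the Muller acceptance family -/
  F : Set (Set Q)
  hF : ∀ X ∈ F, X ⊆ Qω
  /-- the semilinear Parikh constraint -/
  C : Set (Vec s)
  hC : IsSemilinearSetVec C

namespace PMTA

variable {σ : Type} {s : ℕ}

/-- A run of a PMTA on a tree `ζ` over `(Σ × D) ∪ Σ`. -/
def IsRun (A : PMTA σ s) (ζ : Pos → σ × Option (Vec s)) (κ : Pos → A.Q) : Prop :=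
  κ [] = A.qI ∧
  (∀ (ρ : Pos) (d : Vec s), (ζ ρ).2 = some d →
      (κ ρ, ((ζ ρ).1, d), κ (ρ ++ [false]), κ (ρ ++ [true])) ∈ A.ΔP) ∧
  (∀ ρ : Pos, (ζ ρ).2 = none →
      (κ ρ, (ζ ρ).1, κ (ρ ++ [false]), κ (ρ ++ [true])) ∈ A.Δω)

/-- The positions of `ζ` carrying a label from `Σ × D`. -/
def cntPos (ζ : Pos → σ × Option (Vec s)) : Set Pos := {ρ | (ζ ρ).2 ≠ none}

/-- The extended Parikh map: the sum of all `D`-components occurring in `ζ`. -/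
noncomputable def parikh (ζ : Pos → σ × Option (Vec s)) : Vec s :=
  ∑ᶠ ρ : Pos, ((ζ ρ).2.getD 0)

/-- An accepting run: the counting part is finite, the Parikh constraint is satisfied
whenever some counting position exists, all counter increments stem from `D`,
and every infinite path satisfies the Muller condition. -/
def IsAcceptingRun (A : PMTA σ s) (ζ : Pos → σ × Option (Vec s)) (κ : Pos → A.Q) : Prop :=
  A.IsRun ζ κ ∧ (cntPos ζ).Finite ∧
  ((cntPos ζ).Nonempty → parikh ζ ∈ A.C) ∧
  (∀ (ρ : Pos) (d : Vec s), (ζ ρ).2 = some d → d ∈ A.D) ∧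
  ∀ π : ℕ → Pos, IsPath π → infOcc (fun i => κ (π i)) ∈ A.F

/-- The language of a PMTA: all `Σ`-projections of trees admitting an accepting run. -/
def Language (A : PMTA σ s) : Set (Pos → σ) :=
  {ξ | ∃ (ζ : Pos → σ × Option (Vec s)) (κ : Pos → A.Q),
      (∀ ρ : Pos, (ζ ρ).1 = ξ ρ) ∧ A.IsAcceptingRun ζ κ}

end PMTA

/-- A tree language is PMTA-recognizable if it is the language of some PMTA
(of some dimension). -/
def PMTARecognizable {σ : Type} (L : Set (Pos → σ)) : Prop :=
  ∃ (s : ℕ) (A : PMTA σ s), A.Language = L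

open Function Set

open scoped Pointwise

theorem IsLinearSetVec.isSemilinearSetVec {n : ℕ} {C : Set (Vec n)} (h : IsLinearSetVec C) :
    IsSemilinearSetVec C :=
  ⟨1, fun _ => C, fun _ => h, (iUnion_const C).symm⟩

theorem IsLinearSetVec.singleton_zero {n : ℕ} : IsLinearSetVec ({0} : Set (Vec n)) :=
  ⟨0, 0, Fin.elim0, by ext; simp⟩

theorem IsLinearSetVec.univ {n : ℕ} : IsLinearSetVec (univ : Set (Vec n)) := by
  refine ⟨n, 0, fun i => Pi.single i 1, (eq_univ_of_forall fun w => ?_).symm⟩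
  refine ⟨w, ?_⟩
  rw [zero_add]
  conv_lhs => rw [← Finset.univ_sum_single w]
  refine Finset.sum_congr rfl fun i _ => ?_
  rw [← Pi.single_smul', smul_eq_mul, mul_one]

theorem IsLinearSetVec.image {m n : ℕ} {C : Set (Vec m)} (hC : IsLinearSetVec C)
    (f : Vec m →+ Vec n) : IsLinearSetVec (f '' C) := by
  obtain ⟨l, v₀, v, rfl⟩ := hC
  refine ⟨l, f v₀, f ∘ v, ext fun w => ?_⟩
  simp only [mem_image, mem_ofPred_eq, comp_apply]
  constructor
  · rintro ⟨_, ⟨m, rfl⟩, rfl⟩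
    exact ⟨m, by rw [map_add, map_sum]; simp_rw [map_nsmul]⟩
  · rintro ⟨m, rfl⟩
    exact ⟨_, ⟨m, rfl⟩, by rw [map_add, map_sum]; simp_rw [map_nsmul]⟩

theorem IsLinearSetVec.add {n : ℕ} {S T : Set (Vec n)} (hS : IsLinearSetVec S)
    (hT : IsLinearSetVec T) : IsLinearSetVec (S + T) := by
  obtain ⟨l₁, v₀, v, rfl⟩ := hS
  obtain ⟨l₂, u₀, u, rfl⟩ := hT
  refine ⟨l₁ + l₂, v₀ + u₀, Fin.append v u, ext fun w => ?_⟩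
  simp only [mem_add, mem_ofPred_eq, Fin.sum_univ_add, Fin.append_left, Fin.append_right]
  constructor
  · rintro ⟨_, ⟨m, rfl⟩, _, ⟨m', rfl⟩, rfl⟩
    exact ⟨Fin.append m m', by simp only [Fin.append_left, Fin.append_right]; abel⟩
  · rintro ⟨M, rfl⟩
    exact ⟨_, ⟨fun i => M (Fin.castAdd l₂ i), rfl⟩, _,
      ⟨fun j => M (Fin.natAdd l₁ j), rfl⟩, by abel⟩

theorem isSemilinearSetVec_iff_exists_finite {n : ℕ} {C : Set (Vec n)} :
    IsSemilinearSetVec C ↔ ∃ (ι : Type) (_ : Finite ι) (Cs : ι → Set (Vec n)),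
      (∀ i, IsLinearSetVec (Cs i)) ∧ C = ⋃ i, Cs i := by
  constructor
  · rintro ⟨k, Cs, h, rfl⟩
    exact ⟨Fin k, inferInstance, Cs, h, rfl⟩
  · rintro ⟨ι, _, Cs, h, rfl⟩
    obtain ⟨k, ⟨e⟩⟩ := Finite.exists_equiv_fin ι
    exact ⟨k, Cs ∘ e.symm, fun i => h _, (e.symm.surjective.iUnion_comp Cs).symm⟩

theorem IsSemilinearSetVec.union {n : ℕ} {S T : Set (Vec n)} (hS : IsSemilinearSetVec S)
    (hT : IsSemilinearSetVec T) : IsSemilinearSetVec (S ∪ T) := by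
  obtain ⟨ι, _, Ss, hSs, rfl⟩ := isSemilinearSetVec_iff_exists_finite.1 hS
  obtain ⟨κ, _, Ts, hTs, rfl⟩ := isSemilinearSetVec_iff_exists_finite.1 hT
  exact isSemilinearSetVec_iff_exists_finite.2
    ⟨ι ⊕ κ, inferInstance, Sum.elim Ss Ts, Sum.rec hSs hTs, (iUnion_sumElim Ss Ts).symm⟩

theorem IsSemilinearSetVec.add {n : ℕ} {S T : Set (Vec n)} (hS : IsSemilinearSetVec S)
    (hT : IsSemilinearSetVec T) : IsSemilinearSetVec (S + T) := by
  obtain ⟨ι, _, Ss, hSs, rfl⟩ := isSemilinearSetVec_iff_exists_finite.1 hS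
  obtain ⟨κ, _, Ts, hTs, rfl⟩ := isSemilinearSetVec_iff_exists_finite.1 hT
  refine isSemilinearSetVec_iff_exists_finite.2
    ⟨ι × κ, inferInstance, fun p => Ss p.1 + Ts p.2, fun p => (hSs p.1).add (hTs p.2), ?_⟩
  rw [iUnion_add]
  simp_rw [add_iUnion]
  exact (iSup_prod (f := fun p : ι × κ => Ss p.1 + Ts p.2)).symm

theorem IsSemilinearSetVec.image {m n : ℕ} {C : Set (Vec m)} (hC : IsSemilinearSetVec C)
    (f : Vec m →+ Vec n) : IsSemilinearSetVec (f '' C) := by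
  obtain ⟨k, Cs, h, rfl⟩ := hC
  exact ⟨k, fun i => f '' Cs i, fun i => (h i).image f, image_iUnion⟩

namespace Vec

variable {a b n : ℕ}

def fst : Vec (a + b) →+ Vec a where
  toFun w i := w (Fin.castAdd b i)
  map_zero' := rfl
  map_add' _ _ := rfl

def snd : Vec (a + b) →+ Vec b where
  toFun w j := w (Fin.natAdd a j)
  map_zero' := rfl
  map_add' _ _ := rfl

@[simp]
theorem fst_append (x : Vec a) (y : Vec b) : fst (Fin.append x y) = x := by
  ext i; simp [fst]

@[simp]
theorem snd_append (x : Vec a) (y : Vec b) : snd (Fin.append x y) = y := by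
  ext i; simp [snd]

theorem append_fst_snd (w : Vec (a + b)) : Fin.append (fst w) (snd w) = w :=
  Fin.append_castAdd_natAdd

theorem append_add_append (x x' : Vec a) (y y' : Vec b) :
    Fin.append x y + Fin.append x' y' = Fin.append (x + x') (y + y') := by
  ext i; refine Fin.addCases (fun j => ?_) (fun j => ?_) i <;> simp

theorem append_zero_zero : Fin.append (0 : Vec a) (0 : Vec b) = 0 := by
  ext i; refine Fin.addCases (fun j => ?_) (fun j => ?_) i <;> simp

def inl : Vec a →+ Vec (a + b) where
  toFun x := Fin.append x 0
  map_zero' := append_zero_zero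
  map_add' x y := by rw [append_add_append, add_zero]

def inr : Vec b →+ Vec (a + b) where
  toFun y := Fin.append 0 y
  map_zero' := append_zero_zero
  map_add' x y := by rw [append_add_append, add_zero]

def appendSet (S : Set (Vec a)) (T : Set (Vec b)) : Set (Vec (a + b)) :=
  {w | fst w ∈ S ∧ snd w ∈ T}

theorem appendSet_eq_add (S : Set (Vec a)) (T : Set (Vec b)) :
    appendSet S T = inl '' S + inr '' T := by
  ext w
  simp only [appendSet, mem_ofPred_eq, mem_add, mem_image, exists_exists_and_eq_and, inl, inr,
    AddMonoidHom.coe_mk, ZeroHom.coe_mk, append_add_append, add_zero, zero_add]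
  constructor
  · rintro ⟨hS, hT⟩
    exact ⟨_, hS, _, hT, append_fst_snd w⟩
  · rintro ⟨x, hx, y, hy, rfl⟩
    simpa using ⟨hx, hy⟩

theorem _root_.IsSemilinearSetVec.appendSet {S : Set (Vec a)} {T : Set (Vec b)}
    (hS : IsSemilinearSetVec S) (hT : IsSemilinearSetVec T) :
    IsSemilinearSetVec (appendSet S T) := by
  rw [appendSet_eq_add]
  exact (hS.image inl).add (hT.image inr)

/-- The last coordinate is meant to count counting positions, so that `C` only binds trees that
have some. -/
def guarded (C : Set (Vec n)) : Set (Vec (n + 1)) :=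
  {w | snd w ≠ 0 → fst w ∈ C}

theorem guarded_eq_union (C : Set (Vec n)) :
    guarded C = appendSet univ {0} ∪ appendSet C univ := by
  ext w
  simp only [guarded, appendSet, mem_ofPred_eq, mem_union, mem_univ, mem_singleton_iff,
    true_and, and_true]
  tauto

theorem _root_.IsSemilinearSetVec.guarded {C : Set (Vec n)} (hC : IsSemilinearSetVec C) :
    IsSemilinearSetVec (guarded C) := by
  rw [guarded_eq_union]
  have huniv {k : ℕ} := (IsLinearSetVec.univ (n := k)).isSemilinearSetVec
  exact (huniv.appendSet IsLinearSetVec.singleton_zero.isSemilinearSetVec).union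
    (hC.appendSet huniv)

def encode : Option (Vec n) → Vec (n + 1)
  | none => 0
  | some d => Fin.append d 1

def decode (w : Vec (n + 1)) : Option (Vec n) :=
  if snd w = 0 then none else some (fst w)

@[simp]
theorem encode_none : encode (none : Option (Vec n)) = 0 := rfl

@[simp]
theorem fst_encode (o : Option (Vec n)) : fst (encode o) = o.getD 0 := by
  cases o <;> simp [encode]

@[simp]
theorem snd_encode_some (d : Vec n) : snd (encode (some d)) = 1 := by
  simp [encode]

@[simp]
theorem decode_encode (o : Option (Vec n)) : decode (encode o) = o := by
  cases o <;> simp [decode, encode]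

theorem encode_decode_of_mem_range {w : Vec (n + 1)} (h : w ∈ range encode) :
    encode (decode w) = w := by
  obtain ⟨o, rfl⟩ := h
  rw [decode_encode]

variable {s₁ s₂ : ℕ}

def encodePair (o₁ : Option (Vec s₁)) (o₂ : Option (Vec s₂)) :
    Vec ((s₁ + 1) + (s₂ + 1)) :=
  Fin.append (encode o₁) (encode o₂)

@[simp]
theorem fst_encodePair (o₁ : Option (Vec s₁)) (o₂ : Option (Vec s₂)) :
    fst (encodePair o₁ o₂) = encode o₁ :=
  fst_append _ _

@[simp]
theorem snd_encodePair (o₁ : Option (Vec s₁)) (o₂ : Option (Vec s₂)) :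
    snd (encodePair o₁ o₂) = encode o₂ :=
  snd_append _ _

@[simp]
theorem encodePair_none_none :
    encodePair (none : Option (Vec s₁)) (none : Option (Vec s₂)) = 0 :=
  append_zero_zero

end Vec

theorem IsPath.length_eq {π : ℕ → Pos} (h : IsPath π) (i : ℕ) : (π i).length = i := by
  induction i with
  | zero => simp [h.1]
  | succ i ih =>
    obtain ⟨b, hb⟩ := h.2 i
    simp [hb, ih]

theorem IsPath.injective {π : ℕ → Pos} (h : IsPath π) : Injective π := fun i j hij => by
  simpa [h.length_eq] using congrArg List.length hij

theorem infOcc_comp {Q Q' : Type*} [Finite Q] (g : ℕ → Q) (f : Q → Q') :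
    infOcc (fun n => f (g n)) = f '' infOcc g := by
  ext q'
  have hfiber : {n | f (g n) = q'} = ⋃ q ∈ f ⁻¹' {q'}, {n | g n = q} := by
    ext n; simp [eq_comm]
  simp only [infOcc, mem_ofPred_eq, mem_image, hfiber]
  constructor
  · intro hinf
    by_contra! hall
    exact hinf ((toFinite _).biUnion fun q hq => not_infinite.1 fun h => hall q h hq)
  · rintro ⟨q, hq, rfl⟩ hfin
    exact hq (hfin.subset (subset_biUnion_of_mem (u := fun q => {n | g n = q}) rfl))

theorem infOcc_subset_compl {Q : Type*} {g : ℕ → Q} {S : Set Q} (hS : (g ⁻¹' S).Finite) :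
    infOcc g ⊆ Sᶜ := fun q hq hqS =>
  hq (hS.subset fun n (hn : g n = q) => by rwa [mem_preimage, hn])

def prefixClosure (S : Set Pos) : Set Pos :=
  {ρ | ∃ ρ' ∈ S, ρ <+: ρ'}

theorem subset_prefixClosure (S : Set Pos) : S ⊆ prefixClosure S :=
  fun ρ h => ⟨ρ, h, List.prefix_refl ρ⟩

theorem mem_prefixClosure_of_append {S : Set Pos} {ρ : Pos} {b : Bool}
    (h : ρ ++ [b] ∈ prefixClosure S) : ρ ∈ prefixClosure S :=
  let ⟨ρ', hρ', hp⟩ := h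
  ⟨ρ', hρ', (List.prefix_append ρ [b]).trans hp⟩

theorem Set.Finite.prefixClosure {S : Set Pos} (hS : S.Finite) : (prefixClosure S).Finite :=
  (hS.biUnion fun ρ' _ => ρ'.inits.finite_toSet).subset
    fun _ ⟨_, hρ', hp⟩ => mem_biUnion hρ' (List.mem_inits _ _ |>.2 hp)

namespace PMTA

variable {σ : Type} {s : ℕ}

instance (A : PMTA σ s) : Finite A.Q := A.finQ

def Step (A : PMTA σ s) (p : A.Q) (a : σ) : Option (Vec s) → A.Q → A.Q → Prop
  | some d, r, t => (p, (a, d), r, t) ∈ A.ΔP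
  | none, r, t => (p, a, r, t) ∈ A.Δω

theorem Step.label_mem {A : PMTA σ s} {p r t : A.Q} {a : σ} {o : Option (Vec s)}
    (h : A.Step p a o r t) : o ∈ insert none (some '' A.D) := by
  cases o with
  | none => exact mem_insert _ _
  | some d => exact mem_insert_of_mem _ ⟨d, (A.hΔP _ h).2, rfl⟩

theorem isRun_iff {A : PMTA σ s} {ζ : Pos → σ × Option (Vec s)} {κ : Pos → A.Q} :
    A.IsRun ζ κ ↔ κ [] = A.qI ∧
      ∀ ρ, A.Step (κ ρ) (ζ ρ).1 (ζ ρ).2 (κ (ρ ++ [false])) (κ (ρ ++ [true])) := by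
  refine and_congr_right fun _ =>
    ⟨fun ⟨hP, hω⟩ ρ => ?_, fun h => ⟨fun ρ d hd => ?_, fun ρ hρ => ?_⟩⟩
  · cases hρ : (ζ ρ).2 with
    | none => simpa [Step, hρ] using hω ρ hρ
    | some d => simpa [Step, hρ] using hP ρ d hρ
  · simpa [Step, hd] using h ρ
  · simpa [Step, hρ] using h ρ

theorem IsRun.isAcceptingRun {A : PMTA σ s} {ζ : Pos → σ × Option (Vec s)} {κ : Pos → A.Q}
    (hrun : A.IsRun ζ κ) (hfin : (cntPos ζ).Finite)
    (hpar : (cntPos ζ).Nonempty → parikh ζ ∈ A.C)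
    (hmul : ∀ π : ℕ → Pos, IsPath π → infOcc (fun i => κ (π i)) ∈ A.F) :
    A.IsAcceptingRun ζ κ :=
  ⟨hrun, hfin, hpar, fun ρ d hd => (A.hΔP _ (hrun.2.1 ρ d hd)).2, hmul⟩

theorem support_getD_subset_cntPos (ζ : Pos → σ × Option (Vec s)) :
    support (fun ρ => (ζ ρ).2.getD 0) ⊆ cntPos ζ := fun ρ hρ hnone =>
  hρ (by simp [hnone])

theorem support_encode_subset_cntPos (ζ : Pos → σ × Option (Vec s)) :
    support (fun ρ => Vec.encode (ζ ρ).2) ⊆ cntPos ζ := fun ρ hρ hnone =>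
  hρ (by simp [hnone])

theorem finsum_encode_mem_guarded_iff {C : Set (Vec s)} {ζ : Pos → σ × Option (Vec s)}
    (hfin : (cntPos ζ).Finite) :
    ∑ᶠ ρ, Vec.encode (ζ ρ).2 ∈ Vec.guarded C ↔ ((cntPos ζ).Nonempty → parikh ζ ∈ C) := by
  have hsupp : HasFiniteSupport fun ρ => Vec.encode (ζ ρ).2 :=
    hfin.subset (support_encode_subset_cntPos ζ)
  have hfst : Vec.fst (∑ᶠ ρ, Vec.encode (ζ ρ).2) = parikh ζ := by
    simp [map_finsum _ hsupp, parikh]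
  have hsnd : Vec.snd (∑ᶠ ρ, Vec.encode (ζ ρ).2) ≠ 0 ↔ (cntPos ζ).Nonempty := by
    rw [map_finsum _ hsupp]
    constructor
    · intro hne
      by_contra hempty
      refine hne (finsum_eq_zero_of_forall_eq_zero fun ρ => ?_)
      have hρ : (ζ ρ).2 = none := not_not.1 fun h => hempty ⟨ρ, h⟩
      simp [hρ]
    · rintro ⟨ρ, hρ⟩ hzero
      obtain ⟨d, hd⟩ := Option.ne_none_iff_exists'.1 hρ
      have hle := single_le_finsum ρ
        (hsupp.subset (support_comp_subset (map_zero Vec.snd) _)) fun _ => zero_le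
      simpa [hd, hzero] using hle 0
  simp only [Vec.guarded, mem_ofPred_eq, hsnd, hfst]

/-- `counter` reads off, from a counter vector of `P`, the label of `A` in the form `Vec.encode`
gives it. -/
structure Projection {S : ℕ} (P : PMTA σ S) (A : PMTA σ s) where
  state : P.Q → A.Q
  counter : Vec S →+ Vec (s + 1)
  state_qI : state P.qI = A.qI
  step : ∀ {p r t : P.Q} {a : σ} {o : Option (Vec S)}, P.Step p a o r t →
    A.Step (state p) a (o.bind (Vec.decode ∘ counter)) (state r) (state t)
  counter_mem_range : ∀ d ∈ P.D, counter d ∈ range Vec.encode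
  image_mem_F : ∀ X ∈ P.F, state '' X ∈ A.F
  counter_mem_guarded : ∀ w ∈ P.C, counter w ∈ Vec.guarded A.C

theorem Projection.language_subset {S : ℕ} {P : PMTA σ S} {A : PMTA σ s}
    (f : Projection P A) : P.Language ⊆ A.Language := by
  rintro ξ ⟨ζ, κ, hξ, hrun, hfin, hpar, hD, hmul⟩
  set ζ' : Pos → σ × Option (Vec s) :=
    fun ρ => ((ζ ρ).1, (ζ ρ).2.bind (Vec.decode ∘ f.counter))
  have hcnt : cntPos ζ' ⊆ cntPos ζ := fun ρ hρ hnone => hρ (by simp [ζ', hnone])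
  have hfin' := hfin.subset hcnt
  have hencode : ∀ ρ, Vec.encode (ζ' ρ).2 = f.counter ((ζ ρ).2.getD 0) := by
    intro ρ
    cases hρ : (ζ ρ).2 with
    | none => simp [ζ', hρ]
    | some d =>
      simp [ζ', hρ, Vec.encode_decode_of_mem_range (f.counter_mem_range d (hD ρ d hρ))]
  have hparikh : ∑ᶠ ρ, Vec.encode (ζ' ρ).2 = f.counter (parikh ζ) := by
    simp_rw [hencode]
    exact (map_finsum f.counter (hfin.subset (support_getD_subset_cntPos ζ))).symm
  refine ⟨ζ', f.state ∘ κ, hξ, IsRun.isAcceptingRun ?_ hfin' (fun hne => ?_) fun π hπ => ?_⟩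
  · rw [isRun_iff] at hrun ⊢
    exact ⟨by simp [hrun.1, f.state_qI], fun ρ => f.step (hrun.2 ρ)⟩
  · have h := f.counter_mem_guarded _ (hpar (hne.mono hcnt))
    rw [← hparikh, finsum_encode_mem_guarded_iff hfin'] at h
    exact h hne
  · simpa only [comp_apply, infOcc_comp] using f.image_mem_F _ (hmul π hπ)

variable {s₁ s₂ : ℕ}

def prod (A₁ : PMTA σ s₁) (A₂ : PMTA σ s₂) : PMTA σ ((s₁ + 1) + (s₂ + 1)) where
  Q := (A₁.Q × A₂.Q) × Bool
  finQ := inferInstance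
  QP := {q | q.2 = true}
  Qω := {q | q.2 = false}
  hdisj := disjoint_left.2 fun q h₁ h₂ => by simp_all
  hcover := eq_univ_of_forall fun q => by cases h : q.2 <;> simp [h]
  qI := ((A₁.qI, A₂.qI), true)
  D := (fun o => Vec.encodePair o.1 o.2) ''
    (insert none (some '' A₁.D) ×ˢ insert none (some '' A₂.D))
  hD := (((A₁.hD.image _).insert _).prod ((A₂.hD.image _).insert _)).image _
  ΔP := {x | match x with
    | (((p₁, p₂), f), (a, d), ((r₁, r₂), _), ((t₁, t₂), _)) =>
      f = true ∧ ∃ o₁ o₂, d = Vec.encodePair o₁ o₂ ∧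
        A₁.Step p₁ a o₁ r₁ t₁ ∧ A₂.Step p₂ a o₂ r₂ t₂}
  Δω := {x | match x with
    | (((p₁, p₂), f), a, ((r₁, r₂), g), ((t₁, t₂), h)) =>
      f = false ∧ g = false ∧ h = false ∧
        A₁.Step p₁ a none r₁ t₁ ∧ A₂.Step p₂ a none r₂ t₂}
  hΔP := by
    rintro ⟨⟨_, f⟩, ⟨_, _⟩, _, _⟩ ⟨hf, o₁, o₂, rfl, h₁, h₂⟩
    exact ⟨Or.inl hf, ⟨(o₁, o₂), ⟨h₁.label_mem, h₂.label_mem⟩, rfl⟩⟩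
  hΔω := by
    rintro ⟨⟨_, f⟩, _, ⟨_, g⟩, ⟨_, h⟩⟩ ⟨hf, hg, hh, -⟩
    exact ⟨Or.inl hf, hg, hh⟩
  F := {X | X ⊆ {q | q.2 = false} ∧ (·.1.1) '' X ∈ A₁.F ∧ (·.1.2) '' X ∈ A₂.F}
  hF _ hX := hX.1
  C := Vec.appendSet (Vec.guarded A₁.C) (Vec.guarded A₂.C)
  hC := A₁.hC.guarded.appendSet A₂.hC.guarded

section Product

variable {A₁ : PMTA σ s₁} {A₂ : PMTA σ s₂}

theorem prod_step_some {p₁ r₁ t₁ : A₁.Q} {p₂ r₂ t₂ : A₂.Q} {f g h : Bool} {a : σ}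
    {d : Vec ((s₁ + 1) + (s₂ + 1))} :
    (prod A₁ A₂).Step ((p₁, p₂), f) a (some d) ((r₁, r₂), g) ((t₁, t₂), h) ↔
      f = true ∧ ∃ o₁ o₂, d = Vec.encodePair o₁ o₂ ∧
        A₁.Step p₁ a o₁ r₁ t₁ ∧ A₂.Step p₂ a o₂ r₂ t₂ :=
  Iff.rfl

theorem prod_step_none {p₁ r₁ t₁ : A₁.Q} {p₂ r₂ t₂ : A₂.Q} {f g h : Bool} {a : σ} :
    (prod A₁ A₂).Step ((p₁, p₂), f) a none ((r₁, r₂), g) ((t₁, t₂), h) ↔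
      f = false ∧ g = false ∧ h = false ∧
        A₁.Step p₁ a none r₁ t₁ ∧ A₂.Step p₂ a none r₂ t₂ :=
  Iff.rfl

def prod.fst : Projection (prod A₁ A₂) A₁ where
  state q := q.1.1
  counter := Vec.fst
  state_qI := rfl
  step := by
    rintro ⟨⟨_, _⟩, _⟩ ⟨⟨_, _⟩, _⟩ ⟨⟨_, _⟩, _⟩ _ (_ | _) h
    · exact (prod_step_none.1 h).2.2.2.1
    · obtain ⟨-, o₁, o₂, rfl, h₁, -⟩ := prod_step_some.1 h
      simpa using h₁
  counter_mem_range := by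
    rintro _ ⟨o, -, rfl⟩
    exact ⟨o.1, by simp⟩
  image_mem_F _ hX := hX.2.1
  counter_mem_guarded _ hw := hw.1

def prod.snd : Projection (prod A₁ A₂) A₂ where
  state q := q.1.2
  counter := Vec.snd
  state_qI := rfl
  step := by
    rintro ⟨⟨_, _⟩, _⟩ ⟨⟨_, _⟩, _⟩ ⟨⟨_, _⟩, _⟩ _ (_ | _) h
    · exact (prod_step_none.1 h).2.2.2.2
    · obtain ⟨-, o₁, o₂, rfl, -, h₂⟩ := prod_step_some.1 h
      simpa using h₂
  counter_mem_range := by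
    rintro _ ⟨o, -, rfl⟩
    exact ⟨o.2, by simp⟩
  image_mem_F _ hX := hX.2.2
  counter_mem_guarded _ hw := hw.2

variable (ζ₁ : Pos → σ × Option (Vec s₁)) (ζ₂ : Pos → σ × Option (Vec s₂))

/-- Contains the root because the initial state of `prod` is a counting state. -/
def countRegion : Set Pos :=
  prefixClosure (insert [] (cntPos ζ₁ ∪ cntPos ζ₂))

open scoped Classical in
noncomputable def prodTree (ξ : Pos → σ) : Pos → σ × Option (Vec ((s₁ + 1) + (s₂ + 1))) :=
  fun ρ => (ξ ρ,
    if ρ ∈ countRegion ζ₁ ζ₂ then some (Vec.encodePair (ζ₁ ρ).2 (ζ₂ ρ).2) else none)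

open scoped Classical in
noncomputable def prodRun (κ₁ : Pos → A₁.Q) (κ₂ : Pos → A₂.Q) : Pos → (prod A₁ A₂).Q :=
  fun ρ => ((κ₁ ρ, κ₂ ρ), decide (ρ ∈ countRegion ζ₁ ζ₂))

variable {ζ₁ ζ₂}

theorem root_mem_countRegion : [] ∈ countRegion ζ₁ ζ₂ :=
  subset_prefixClosure _ (mem_insert _ _)

theorem labels_eq_none_of_notMem_countRegion {ρ : Pos} (h : ρ ∉ countRegion ζ₁ ζ₂) :
    (ζ₁ ρ).2 = none ∧ (ζ₂ ρ).2 = none := by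
  constructor <;> by_contra hne <;> exact h (subset_prefixClosure _ (by simp [cntPos, hne]))

theorem countRegion_finite (h₁ : (cntPos ζ₁).Finite) (h₂ : (cntPos ζ₂).Finite) :
    (countRegion ζ₁ ζ₂).Finite :=
  ((h₁.union h₂).insert []).prefixClosure

theorem cntPos_prodTree (ξ : Pos → σ) : cntPos (prodTree ζ₁ ζ₂ ξ) = countRegion ζ₁ ζ₂ := by
  ext ρ
  by_cases hρ : ρ ∈ countRegion ζ₁ ζ₂ <;> simp [cntPos, prodTree, hρ]

theorem isRun_prodRun {ξ : Pos → σ} {κ₁ : Pos → A₁.Q} {κ₂ : Pos → A₂.Q}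
    (h₁ : A₁.IsRun ζ₁ κ₁) (h₂ : A₂.IsRun ζ₂ κ₂)
    (hξ₁ : ∀ ρ, (ζ₁ ρ).1 = ξ ρ) (hξ₂ : ∀ ρ, (ζ₂ ρ).1 = ξ ρ) :
    (prod A₁ A₂).IsRun (prodTree ζ₁ ζ₂ ξ) (prodRun ζ₁ ζ₂ κ₁ κ₂) := by
  rw [isRun_iff] at h₁ h₂ ⊢
  refine ⟨by simp [prodRun, h₁.1, h₂.1, root_mem_countRegion]; rfl, fun ρ => ?_⟩
  have hstep₁ := hξ₁ ρ ▸ h₁.2 ρ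
  have hstep₂ := hξ₂ ρ ▸ h₂.2 ρ
  by_cases hρ : ρ ∈ countRegion ζ₁ ζ₂
  · simp only [prodTree, prodRun, hρ, if_true, decide_true]
    exact prod_step_some.2 ⟨rfl, _, _, rfl, hstep₁, hstep₂⟩
  · have hchild (b : Bool) : ρ ++ [b] ∉ countRegion ζ₁ ζ₂ :=
      fun h => hρ (mem_prefixClosure_of_append h)
    obtain ⟨hn₁, hn₂⟩ := labels_eq_none_of_notMem_countRegion hρ
    simp only [prodTree, prodRun, hρ, hchild, if_false, decide_false]
    rw [hn₁] at hstep₁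
    rw [hn₂] at hstep₂
    exact prod_step_none.2 ⟨rfl, rfl, rfl, hstep₁, hstep₂⟩

theorem parikh_prodTree_mem_C {ξ : Pos → σ}
    (h₁ : (cntPos ζ₁).Finite) (h₂ : (cntPos ζ₂).Finite)
    (hpar₁ : (cntPos ζ₁).Nonempty → parikh ζ₁ ∈ A₁.C)
    (hpar₂ : (cntPos ζ₂).Nonempty → parikh ζ₂ ∈ A₂.C) :
    parikh (prodTree ζ₁ ζ₂ ξ) ∈ (prod A₁ A₂).C := by
  have hlabel (ρ : Pos) :
      (prodTree ζ₁ ζ₂ ξ ρ).2.getD 0 = Vec.encodePair (ζ₁ ρ).2 (ζ₂ ρ).2 := by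
    by_cases hρ : ρ ∈ countRegion ζ₁ ζ₂
    · simp [prodTree, hρ]
    · obtain ⟨hn₁, hn₂⟩ := labels_eq_none_of_notMem_countRegion hρ
      simp [prodTree, hρ, hn₁, hn₂]
  have hsupp : HasFiniteSupport fun ρ => Vec.encodePair (ζ₁ ρ).2 (ζ₂ ρ).2 := by
    refine (countRegion_finite h₁ h₂).subset ?_
    simpa only [hlabel, cntPos_prodTree] using
      support_getD_subset_cntPos (prodTree ζ₁ ζ₂ ξ)
  unfold parikh
  simp_rw [hlabel]
  refine ⟨?_, ?_⟩
  · rw [map_finsum _ hsupp]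
    simpa only [Vec.fst_encodePair] using (finsum_encode_mem_guarded_iff h₁).2 hpar₁
  · rw [map_finsum _ hsupp]
    simpa only [Vec.snd_encodePair] using (finsum_encode_mem_guarded_iff h₂).2 hpar₂

open scoped Classical in
theorem infOcc_prodRun_mem_F {κ₁ : Pos → A₁.Q} {κ₂ : Pos → A₂.Q}
    (hfin : (countRegion ζ₁ ζ₂).Finite)
    (hmul₁ : ∀ π : ℕ → Pos, IsPath π → infOcc (fun i => κ₁ (π i)) ∈ A₁.F)
    (hmul₂ : ∀ π : ℕ → Pos, IsPath π → infOcc (fun i => κ₂ (π i)) ∈ A₂.F)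
    {π : ℕ → Pos} (hπ : IsPath π) :
    infOcc (fun i => prodRun ζ₁ ζ₂ κ₁ κ₂ (π i)) ∈ (prod A₁ A₂).F := by
  refine ⟨fun q hq => ?_, ?_, ?_⟩
  · have hcount : ((fun i => prodRun ζ₁ ζ₂ κ₁ κ₂ (π i)) ⁻¹' {q | q.2 = true}).Finite :=
      (hfin.preimage hπ.injective.injOn).subset fun _ hi => of_decide_eq_true hi
    exact Bool.eq_false_iff.2 (infOcc_subset_compl hcount hq)
  · convert hmul₁ π hπ using 1
    exact (infOcc_comp _ _).symm
  · convert hmul₂ π hπ using 1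
    exact (infOcc_comp _ _).symm

theorem mem_language_prod {ξ : Pos → σ} (h₁ : ξ ∈ A₁.Language) (h₂ : ξ ∈ A₂.Language) :
    ξ ∈ (prod A₁ A₂).Language := by
  obtain ⟨ζ₁, κ₁, hξ₁, hrun₁, hfin₁, hpar₁, -, hmul₁⟩ := h₁
  obtain ⟨ζ₂, κ₂, hξ₂, hrun₂, hfin₂, hpar₂, -, hmul₂⟩ := h₂
  have hfin := countRegion_finite hfin₁ hfin₂
  exact ⟨prodTree ζ₁ ζ₂ ξ, prodRun ζ₁ ζ₂ κ₁ κ₂, fun _ => rfl,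
    (isRun_prodRun hrun₁ hrun₂ hξ₁ hξ₂).isAcceptingRun (cntPos_prodTree ξ ▸ hfin)
      (fun _ => parikh_prodTree_mem_C hfin₁ hfin₂ hpar₁ hpar₂)
      fun _ hπ => infOcc_prodRun_mem_F hfin hmul₁ hmul₂ hπ⟩

end Product

theorem language_prod (A₁ : PMTA σ s₁) (A₂ : PMTA σ s₂) :
    (prod A₁ A₂).Language = A₁.Language ∩ A₂.Language :=
  Subset.antisymm (subset_inter prod.fst.language_subset prod.snd.language_subset)
    fun _ h => mem_language_prod h.1 h.2

end PMTA

theorem pmta_intersection_general {σ : Type} {s₁ s₂ : ℕ}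
    (A₁ : PMTA σ s₁) (A₂ : PMTA σ s₂) :
    ∃ (s : ℕ) (A : PMTA σ s), A.Language = A₁.Language ∩ A₂.Language :=
  ⟨_, PMTA.prod A₁ A₂, PMTA.language_prod A₁ A₂⟩

/-- For any two PMTA over the same finite alphabet there is a PMTA recognizing the
intersection of their languages. -/
theorem pmta_intersection {σ : Type} [Fintype σ] {s₁ s₂ : ℕ}
    (A₁ : PMTA σ s₁) (A₂ : PMTA σ s₂) :
    ∃ (s : ℕ) (A : PMTA σ s), A.Language = A₁.Language ∩ A₂.Language :=
  pmta_intersection_general A₁ A₂
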